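/- Let (G,τ) be an ss-characterized precompact Hausdorff abelian group whose underlying topological space is a k-space (a subset is closed if and only if its intersection with every compact subset is closed in that compact subset). Then G is countable and (G,τ) is a sequential space (every sequentially closed subset is closed). -/

import Mathlib

open Filter Topology

noncomputable section

namespace SSChar

/-- The circle group `𝕋 = ℝ/ℤ`. -/
abbrev Torus : Type := AddCircle (1 : ℝ)

variable {G : Type*}

/-- The covering condition defining precompactness (total boundedness) of a group
topology: every neighborhood `U` of `0` admits a finite set `F` with `G = F + U`. -/
def PrecompactCover [AddCommGroup G] (t : TopologicalSpace G) : Prop :=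
  ∀ U ∈ @nhds G t 0, ∃ F : Set G, F.Finite ∧ ∀ x : G, ∃ f ∈ F, x - f ∈ U

/-- `t` is a Hausdorff group topology on `G`. -/
def IsHausdorffGroupTopology [AddCommGroup G] (t : TopologicalSpace G) : Prop :=
  @IsTopologicalAddGroup G t _ ∧ @T2Space G t

/-- `t` is a precompact Hausdorff group topology on `G`. -/
def IsPrecompactGroupTopology [AddCommGroup G] (t : TopologicalSpace G) : Prop :=
  IsHausdorffGroupTopology t ∧ PrecompactCover t

/-- The sequence `u` converges to `0` in the topology `t`. -/
def ConvergesToZero [AddCommGroup G] (t : TopologicalSpace G) (u : ℕ → G) : Prop :=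
  Filter.Tendsto u Filter.atTop (@nhds G t 0)

/-- `u` is a TB-sequence: some precompact Hausdorff group topology makes `u → 0`. -/
def IsTBSequence [AddCommGroup G] (u : ℕ → G) : Prop :=
  ∃ t : TopologicalSpace G, IsPrecompactGroupTopology t ∧ ConvergesToZero t u

/-- `t` is the finest precompact Hausdorff group topology in which `u → 0`,
i.e. `t = τ_u`.  (Recall that in Mathlib's order on topologies, finer means `≤`.) -/
def IsTauU [AddCommGroup G] (u : ℕ → G) (t : TopologicalSpace G) : Prop :=
  IsPrecompactGroupTopology t ∧ ConvergesToZero t u ∧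
    ∀ t' : TopologicalSpace G, IsPrecompactGroupTopology t' → ConvergesToZero t' u → t ≤ t'

/-- `t` is the finest Hausdorff group topology in which `u → 0`, i.e. `t = 𝒯_u`. -/
def IsTTu [AddCommGroup G] (u : ℕ → G) (t : TopologicalSpace G) : Prop :=
  IsHausdorffGroupTopology t ∧ ConvergesToZero t u ∧
    ∀ t' : TopologicalSpace G, IsHausdorffGroupTopology t' → ConvergesToZero t' u → t ≤ t'

/-- `(G, t)` is single-sequence characterized: `t = τ_u` for some (TB-)sequence `u`. -/
def SSCharacterized [AddCommGroup G] (t : TopologicalSpace G) : Prop :=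
  ∃ u : ℕ → G, IsTauU u t

/-- `χ` is a `t`-continuous character of `G`. -/
def IsContChar [AddCommGroup G] (t : TopologicalSpace G) (χ : G →+ Torus) : Prop :=
  @Continuous G Torus t _ χ

/-- The group of `t`-continuous characters of `G`. -/
def charGroup (G : Type*) [AddCommGroup G] (t : TopologicalSpace G) : Type _ :=
  {χ : G →+ Torus // IsContChar t χ}

/-- The compact-open topology on the character group: this makes it the
Pontryagin dual `(G,t)^∧`. -/
def charTopology (G : Type*) [AddCommGroup G] (t : TopologicalSpace G) :
    TopologicalSpace (charGroup G t) :=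
  TopologicalSpace.generateFrom
    { S | ∃ (K : Set G) (U : Set Torus), @IsCompact G t K ∧ IsOpen U ∧
        S = { χ : charGroup G t | ∀ x ∈ K, χ.1 x ∈ U } }

/-- The Bohr modification `t⁺` of `t`: the initial topology induced by all
`t`-continuous characters. -/
def bohrModification [AddCommGroup G] (t : TopologicalSpace G) : TopologicalSpace G :=
  ⨅ χ : charGroup G t, TopologicalSpace.induced (χ.1 : G → Torus) inferInstance

/-- The Bohr topology of the (discrete) abelian group `X`: the initial topology
induced by all homomorphisms `X → 𝕋`. -/
def bohrDiscrete (X : Type*) [AddCommGroup X] : TopologicalSpace X :=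
  ⨅ χ : X →+ Torus, TopologicalSpace.induced (χ : X → Torus) inferInstance

/-- The extension topology `ζ̄` on `G` of a group topology `ζ` on the subgroup `H`:
its neighborhood filter at `x` is generated by the sets `x + V`, `V` a
`ζ`-neighborhood of `0` in `H`. -/
def extTopology [AddCommGroup G] (H : AddSubgroup G) (ζ : TopologicalSpace H) :
    TopologicalSpace G :=
  TopologicalSpace.mkOfNhds fun x => Filter.map (fun h : H => x + (h : G)) (@nhds H ζ 0)

/-- The subspace topology induced on a subgroup `H` by a topology `t` on `G`. -/
def restrictTopology [AddCommGroup G] (H : AddSubgroup G) (t : TopologicalSpace G) :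
    TopologicalSpace H :=
  t.induced (Subtype.val : H → G)

/-- The quotient topology on `G ⧸ H` induced by a topology `t` on `G`. -/
def quotientTopology [AddCommGroup G] (H : AddSubgroup G) (t : TopologicalSpace G) :
    TopologicalSpace (G ⧸ H) :=
  t.coinduced (QuotientAddGroup.mk : G → G ⧸ H)

/-- `H` is B-embedded in `(G, t)`: every (algebraic) character of `G ⧸ H` is
continuous in the quotient topology. -/
def IsBEmbedded [AddCommGroup G] (t : TopologicalSpace G) (H : AddSubgroup G) : Prop :=
  ∀ χ : G ⧸ H →+ Torus, @Continuous (G ⧸ H) Torus (quotientTopology H t) _ χ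

/-- `t` is the finest precompact extension to `G` of the topology `ζ` on the
subgroup `H`: `t` is a precompact Hausdorff group topology restricting to `ζ` on `H`,
and every precompact Hausdorff group topology on `G` restricting to `ζ` on `H`
is coarser than `t`. -/
def IsFinestPrecompactExtension [AddCommGroup G] (H : AddSubgroup G)
    (ζ : TopologicalSpace H) (t : TopologicalSpace G) : Prop :=
  IsPrecompactGroupTopology t ∧ restrictTopology H t = ζ ∧
    ∀ t' : TopologicalSpace G, IsPrecompactGroupTopology t' → restrictTopology H t' = ζ →
      t ≤ t'

/-- `𝕋₊`: the image of `[-1/4, 1/4]` under the quotient map `ℝ → 𝕋`. -/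
def Tplus : Set Torus := (fun x : ℝ => (x : Torus)) '' Set.Icc (-(1/4) : ℝ) (1/4)

/-- `A` is quasi-convex in `(G, t)`. -/
def IsQuasiConvex [AddCommGroup G] (t : TopologicalSpace G) (A : Set G) : Prop :=
  ∀ g ∉ A, ∃ χ : G →+ Torus, IsContChar t χ ∧ (∀ a ∈ A, χ a ∈ Tplus) ∧ χ g ∉ Tplus

/-- `(G, t)` is locally quasi-convex: `0` has a neighborhood base of
quasi-convex sets. -/
def IsLocallyQuasiConvex [AddCommGroup G] (t : TopologicalSpace G) : Prop :=
  ∀ U ∈ @nhds G t 0, ∃ V ∈ @nhds G t 0, V ⊆ U ∧ IsQuasiConvex t V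

/-- The weight of a topology: the minimal cardinality of a base. -/
def tweight {X : Type*} (t : TopologicalSpace X) : Cardinal :=
  sInf { c : Cardinal |
    ∃ B : Set (Set X), @TopologicalSpace.IsTopologicalBasis X t B ∧ c = Cardinal.mk B }

/-- `(G, t)` is maximally almost periodic: the `t`-continuous characters
separate the points of `G`. -/
def IsMAP [AddCommGroup G] (t : TopologicalSpace G) : Prop :=
  ∀ x : G, x ≠ 0 → ∃ χ : G →+ Torus, IsContChar t χ ∧ χ x ≠ 0

/-- Two topologies on `G` are compatible: they have the same continuous characters. -/
def Compatible [AddCommGroup G] (t t' : TopologicalSpace G) : Prop :=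
  ∀ χ : G →+ Torus, IsContChar t χ ↔ IsContChar t' χ

/-- `(G, t)` is a MAP-Mackey group: it is a MAP Hausdorff group topology and every
compatible MAP group topology on `G` is coarser. -/
def IsMAPMackey [AddCommGroup G] (t : TopologicalSpace G) : Prop :=
  IsHausdorffGroupTopology t ∧ IsMAP t ∧
    ∀ t' : TopologicalSpace G, @IsTopologicalAddGroup G t' _ → IsMAP t' → Compatible t t' →
      t ≤ t'

/-- `(X, t)` is a k-space: a subset is closed as soon as its intersection with every
compact subset `K` is closed in `K`. -/
def IsKSpace {X : Type*} (t : TopologicalSpace X) : Prop :=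
  ∀ A : Set X,
    (∀ K : Set X, @IsCompact X t K →
      @IsClosed K (t.induced (Subtype.val : K → X)) {x : K | (x : X) ∈ A}) →
    @IsClosed X t A

/-- `(X, t)` is pseudocompact: every continuous real-valued function is bounded. -/
def IsPseudocompact {X : Type*} (t : TopologicalSpace X) : Prop :=
  ∀ f : X → ℝ, @Continuous X ℝ t _ f → ∃ C : ℝ, ∀ x : X, |f x| ≤ C

/-- `(X, t)` is sequentially complete: every Cauchy sequence (w.r.t. the group
uniformity) converges. -/
def SeqComplete {X : Type*} [AddCommGroup X] (t : TopologicalSpace X) : Prop :=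
  ∀ x : ℕ → X, (∀ U ∈ @nhds X t 0, ∃ N : ℕ, ∀ m ≥ N, ∀ n ≥ N, x m - x n ∈ U) →
    ∃ a : X, Filter.Tendsto x Filter.atTop (@nhds X t a)

/-!
Let `H` be the subgroup generated by `u`. A character `χ` of `G` with `χ (u n) → 0` is
`τ`-continuous: `τ ⊓ χ⁻¹(𝕋)` is again a precompact Hausdorff group topology in which `u → 0`,
and `τ = τ_u` is the finest one. In particular `G → G ⧸ H` is continuous into the Bohr
topology of the discrete group `G ⧸ H`, whose compact sets are finite. Indeed, an infinite
compact set meets the subgroup generated by a sequence of its points, which is countable and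
Bohr-closed, in an infinite countable compact set, hence contains an injective convergent
sequence; but along a sequence `w k → 0` the Haar integrals
`∫ exp (2πi γ (w k)) dγ` over the compact group of all characters tend to `1`, while
orthogonality makes them vanish whenever `w k ≠ 0`. As `τ` is a k-space, every union of
cosets of `H` is then closed, so `H` is open; by precompactness it has finite index, and it is
countable. Finally, compact subsets of the countable Hausdorff group are first countable, so
the k-space `(G, τ)` is sequential.
-/

open MeasureTheory

lemma exists_finite_sub_mem_of_finite_cover [AddGroup G] {S : Set (Set G)} {U : Set G}
    (hS : S.Finite) (hcov : ∀ x, ∃ s ∈ S, x ∈ s) (hsub : ∀ s ∈ S, ∀ x ∈ s, ∀ y ∈ s, x - y ∈ U) :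
    ∃ F : Set G, F.Finite ∧ ∀ x : G, ∃ f ∈ F, x - f ∈ U := by
  refine ⟨(fun s => Classical.epsilon (· ∈ s)) '' S, hS.image _, fun x => ?_⟩
  obtain ⟨s, hs, hxs⟩ := hcov x
  exact ⟨_, Set.mem_image_of_mem _ hs, hsub s hs x hxs _ (Classical.epsilon_spec ⟨x, hxs⟩)⟩

lemma PrecompactCover.exists_finite_cover [AddCommGroup G] [TopologicalSpace G]
    [IsTopologicalAddGroup G] (h : PrecompactCover ‹TopologicalSpace G›)
    {U : Set G} (hU : U ∈ 𝓝 (0 : G)) :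
    ∃ S : Set (Set G), S.Finite ∧ (∀ x, ∃ s ∈ S, x ∈ s) ∧ ∀ s ∈ S, ∀ x ∈ s, ∀ y ∈ s, x - y ∈ U := by
  obtain ⟨V, hV, hVU⟩ := exists_nhds_half_neg hU
  obtain ⟨F, hF, hcov⟩ := h V hV
  refine ⟨(fun f => {x | x - f ∈ V}) '' F, hF.image _, ?_, ?_⟩
  · intro x
    obtain ⟨f, hf, hxf⟩ := hcov x
    exact ⟨_, Set.mem_image_of_mem _ hf, hxf⟩
  · rintro _ ⟨f, -, rfl⟩ x hx y hy
    simpa using hVU _ hx _ hy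

lemma precompactCover_of_compactSpace [AddCommGroup G] [TopologicalSpace G]
    [IsTopologicalAddGroup G] [CompactSpace G] : PrecompactCover ‹TopologicalSpace G› := by
  intro U hU
  obtain ⟨t, ht⟩ := compact_covered_by_add_left_translates isCompact_univ
    ⟨0, mem_interior_iff_mem_nhds.mpr hU⟩
  refine ⟨Neg.neg '' (t : Set G), t.finite_toSet.image _, fun x => ?_⟩
  obtain ⟨g, hg, hgx⟩ := Set.mem_iUnion₂.mp (ht (Set.mem_univ x))
  exact ⟨-g, Set.mem_image_of_mem _ hg, by simpa [add_comm] using hgx⟩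

lemma PrecompactCover.inf [AddCommGroup G] {t₁ t₂ : TopologicalSpace G}
    (hg₁ : @IsTopologicalAddGroup G t₁ _) (hg₂ : @IsTopologicalAddGroup G t₂ _)
    (h₁ : PrecompactCover t₁) (h₂ : PrecompactCover t₂) :
    PrecompactCover (t₁ ⊓ t₂) := by
  intro U hU
  rw [nhds_inf (t₁ := t₁) (t₂ := t₂), Filter.mem_inf_iff] at hU
  obtain ⟨U₁, hU₁, U₂, hU₂, rfl⟩ := hU
  obtain ⟨S₁, hS₁, hcov₁, hsub₁⟩ := @PrecompactCover.exists_finite_cover G _ t₁ hg₁ h₁ _ hU₁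
  obtain ⟨S₂, hS₂, hcov₂, hsub₂⟩ := @PrecompactCover.exists_finite_cover G _ t₂ hg₂ h₂ _ hU₂
  refine exists_finite_sub_mem_of_finite_cover (hS₁.image2 (· ∩ ·) hS₂) ?_ ?_
  · intro x
    obtain ⟨⟨s₁, hs₁, hx₁⟩, ⟨s₂, hs₂, hx₂⟩⟩ := And.intro (hcov₁ x) (hcov₂ x)
    exact ⟨_, Set.mem_image2_of_mem hs₁ hs₂, hx₁, hx₂⟩
  · rintro _ ⟨s₁, hs₁, s₂, hs₂, rfl⟩ x hx y hy
    exact ⟨hsub₁ s₁ hs₁ x hx.1 y hy.1, hsub₂ s₂ hs₂ x hx.2 y hy.2⟩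

lemma PrecompactCover.induced {K : Type*} [AddCommGroup G] [AddCommGroup K] [TopologicalSpace K]
    [IsTopologicalAddGroup K] (hK : PrecompactCover ‹TopologicalSpace K›) (f : G →+ K) :
    PrecompactCover (TopologicalSpace.induced f ‹TopologicalSpace K›) := by
  intro U hU
  rw [nhds_induced, map_zero] at hU
  obtain ⟨W, hW, hWU⟩ := Filter.mem_comap.mp hU
  obtain ⟨S, hS, hcov, hsub⟩ := hK.exists_finite_cover hW
  refine exists_finite_sub_mem_of_finite_cover (hS.image (f ⁻¹' ·)) ?_ ?_
  · intro x
    obtain ⟨s, hs, hxs⟩ := hcov (f x)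
    exact ⟨_, Set.mem_image_of_mem _ hs, hxs⟩
  · rintro _ ⟨s, hs, rfl⟩ x hx y hy
    exact hWU (by simpa using hsub s hs _ hx _ hy)

lemma IsTauU.continuous_of_tendsto [AddCommGroup G] {u : ℕ → G} {τ : TopologicalSpace G}
    (hτu : IsTauU u τ) (χ : G →+ Torus) (hχ : Tendsto (fun n => χ (u n)) atTop (𝓝 0)) :
    Continuous[τ, _] χ := by
  obtain ⟨⟨⟨hg, ht2⟩, hpc⟩, hu, hmin⟩ := hτu
  let τχ := TopologicalSpace.induced χ (inferInstance : TopologicalSpace Torus)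
  have hgχ : @IsTopologicalAddGroup G τχ _ := topologicalAddGroup_induced χ
  have hpc' : IsPrecompactGroupTopology (τ ⊓ τχ) :=
    ⟨⟨topologicalAddGroup_inf hg hgχ, t2Space_antitone inf_le_left ht2⟩,
      hpc.inf hg hgχ (precompactCover_of_compactSpace.induced χ)⟩
  have hu' : ConvergesToZero (τ ⊓ τχ) u := by
    rw [ConvergesToZero, nhds_inf (t₁ := τ) (t₂ := τχ), nhds_induced, map_zero]
    exact tendsto_inf.mpr ⟨hu, tendsto_comap_iff.mpr hχ⟩
  exact continuous_iff_le_induced.mpr ((hmin _ hpc' hu').trans inf_le_right)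

lemma countable_addSubgroupClosure_range {X : Type*} [AddGroup X] (f : ℕ → X) :
    (AddSubgroup.closure (Set.range f) : Set X).Countable := by
  rw [← FreeAddGroup.range_lift_eq_closure, AddMonoidHom.coe_range]
  exact Set.countable_range _

lemma CompactSpace.firstCountableTopology_of_countable {X : Type*} [TopologicalSpace X]
    [CompactSpace X] [T2Space X] [Countable X] : FirstCountableTopology X := by
  refine ⟨fun a => ?_⟩
  have sep : ∀ y : {y : X // y ≠ a}, ∃ U V : Set X,
      IsOpen U ∧ IsOpen V ∧ (y : X) ∈ U ∧ a ∈ V ∧ Disjoint U V := fun y => t2_separation y.2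
  choose U V hU hV hyU haV hUV using sep
  have : 𝓝 a = ⨅ y, 𝓟 (V y) := by
    refine le_antisymm (le_iInf fun y => le_principal_iff.mpr ((hV y).mem_nhds (haV y)))
      (le_nhds_of_unique_clusterPt fun b hb => ?_)
    by_contra hba
    obtain ⟨c, hcU, hcV⟩ := clusterPt_iff_nonempty.mp hb ((hU ⟨b, hba⟩).mem_nhds (hyU _))
      (mem_iInf_of_mem ⟨b, hba⟩ (mem_principal_self _))
    exact (hUV _).notMem_of_mem_left hcU hcV
  rw [this]
  infer_instance

lemma integral_toCircle_eq_zero {Γ : Type*} [AddGroup Γ] [MeasurableSpace Γ] [MeasurableAdd Γ]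
    (μ : Measure Γ) [μ.IsAddLeftInvariant] (ψ : Γ →+ Torus) {γ₀ : Γ} (hγ₀ : ψ γ₀ ≠ 0) :
    ∫ γ, (AddCircle.toCircle (ψ γ) : ℂ) ∂μ = 0 := by
  set I := ∫ γ, (AddCircle.toCircle (ψ γ) : ℂ) ∂μ
  have hI : I = AddCircle.toCircle (ψ γ₀) * I := by
    calc I = ∫ γ, (AddCircle.toCircle (ψ (γ₀ + γ)) : ℂ) ∂μ := (integral_add_left_eq_self _ γ₀).symm
      _ = _ := by simp only [map_add, AddCircle.toCircle_add, Circle.coe_mul, integral_const_mul, I]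
  have hne : (AddCircle.toCircle (ψ γ₀) : ℂ) ≠ 1 := fun h => hγ₀ <|
    AddCircle.injective_toCircle one_ne_zero (by rw [AddCircle.toCircle_zero]; exact Subtype.ext h)
  have : (1 - (AddCircle.toCircle (ψ γ₀) : ℂ)) * I = 0 := by linear_combination hI
  exact (mul_eq_zero.mp this).resolve_left (sub_ne_zero.mpr hne.symm)

lemma exists_torus_char_ne_zero {A : Type*} [AddCommGroup A] {a : A} (ha : a ≠ 0) :
    ∃ χ : A →+ Torus, χ a ≠ 0 := by
  obtain ⟨c, hc⟩ := CharacterModule.exists_character_apply_ne_zero_of_ne_zero ha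
  let ι : AddCircle (1 : ℚ) →+ Torus :=
    QuotientAddGroup.map _ _ (Rat.castHom ℝ).toAddMonoidHom fun q ⟨n, hn⟩ => ⟨n, by simp [← hn]⟩
  refine ⟨ι.comp c, fun h => hc ?_⟩
  obtain ⟨q, hq⟩ := QuotientAddGroup.mk_surjective (c a)
  change ι (c a) = 0 at h
  rw [← hq] at h ⊢
  obtain ⟨n, hn⟩ := (AddCircle.coe_eq_zero_iff (1 : ℝ)).mp h
  refine (AddCircle.coe_eq_zero_iff (1 : ℚ)).mpr ⟨n, ?_⟩
  simpa using (Rat.cast_injective (α := ℝ)) (by simpa using hn)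

section Bohr

variable {X : Type*} [AddCommGroup X]

lemma continuous_bohrDiscrete (χ : X →+ Torus) : Continuous[bohrDiscrete X, _] χ :=
  continuous_iff_le_induced.mpr (iInf_le _ χ)

lemma t2Space_bohrDiscrete : @T2Space X (bohrDiscrete X) := by
  let := bohrDiscrete X
  refine T2Space.of_injective_continuous (f := fun x (χ : X →+ Torus) => χ x) (fun x y hxy => ?_)
    (continuous_pi continuous_bohrDiscrete)
  by_contra hne
  obtain ⟨χ, hχ⟩ := exists_torus_char_ne_zero (sub_ne_zero.mpr hne)
  exact hχ (by rw [map_sub, sub_eq_zero]; exact congrFun hxy χ)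

lemma isClosed_bohrDiscrete_addSubgroup (Y : AddSubgroup X) :
    IsClosed[bohrDiscrete X] (Y : Set X) := by
  let := bohrDiscrete X
  have hY : (Y : Set X) = ⋂ ψ : X ⧸ Y →+ Torus, (ψ.comp (QuotientAddGroup.mk' Y)) ⁻¹' {0} := by
    ext x
    simp only [Set.mem_iInter, Set.mem_preimage, Set.mem_singleton_iff, SetLike.mem_coe,
      AddMonoidHom.comp_apply, QuotientAddGroup.mk'_apply]
    refine ⟨fun hx ψ => by rw [(QuotientAddGroup.eq_zero_iff x).mpr hx, map_zero], fun h => ?_⟩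
    by_contra hx
    obtain ⟨ψ, hψ⟩ := exists_torus_char_ne_zero (mt (QuotientAddGroup.eq_zero_iff x).mp hx)
    exact hψ (h ψ)
  rw [hY]
  exact isClosed_iInter fun ψ => isClosed_singleton.preimage (continuous_bohrDiscrete _)

lemma eventually_eq_zero_of_forall_char_tendsto_zero {w : ℕ → X}
    (hw : ∀ χ : X →+ Torus, Tendsto (fun k => χ (w k)) atTop (𝓝 0)) : ∀ᶠ k in atTop, w k = 0 := by
  let Γ := (AddMonoidHom.coeFn X Torus).range
  have : CompactSpace Γ :=
    isCompact_iff_compactSpace.mp (AddMonoidHom.isClosed_range_coe X Torus).isCompact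
  let : MeasurableSpace Γ := borel Γ
  have : BorelSpace Γ := ⟨rfl⟩
  let μ : Measure Γ := Measure.addHaar
  let ev : X → Γ →+ Torus := fun x => (Pi.evalAddMonoidHom (fun _ => Torus) x).comp Γ.subtype
  let e : X → Γ → ℂ := fun x γ => AddCircle.toCircle (ev x γ)
  have hzero : ∀ k, w k ≠ 0 → ∫ γ, e (w k) γ ∂μ = 0 := fun k hk => by
    obtain ⟨χ, hχ⟩ := exists_torus_char_ne_zero hk
    exact integral_toCircle_eq_zero μ (ev (w k)) (γ₀ := ⟨χ, χ, rfl⟩) hχ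
  have hlim : Tendsto (fun k => ∫ γ, e (w k) γ ∂μ) atTop (𝓝 (∫ _γ, (1 : ℂ) ∂μ)) := by
    refine tendsto_integral_of_dominated_convergence (fun _ => 1) (fun k => ?_) (integrable_const 1)
      (fun k => .of_forall fun γ => (Circle.norm_coe _).le) (.of_forall ?_)
    · exact (continuous_subtype_val.comp (AddCircle.continuous_toCircle.comp
        ((continuous_apply (w k)).comp continuous_subtype_val))).aestronglyMeasurable
    · rintro ⟨_, χ, rfl⟩
      have hc : Tendsto (fun t : Torus => (AddCircle.toCircle t : ℂ)) (𝓝 0) (𝓝 1) := by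
        have := (continuous_subtype_val.tendsto _).comp
          ((AddCircle.continuous_toCircle (T := 1)).tendsto 0)
        rwa [AddCircle.toCircle_zero] at this
      exact hc.comp (hw χ)
  have hne : (∫ _γ, (1 : ℂ) ∂μ) ≠ 0 := by
    rw [integral_const, Complex.real_smul, mul_one, Complex.ofReal_ne_zero]
    exact (ENNReal.toReal_pos (NeZero.ne _) (measure_ne_top _ _)).ne'
  filter_upwards [hlim.eventually_ne hne] with k hk
  exact not_not.mp fun h => hk (hzero k h)

lemma finite_of_isCompact_bohrDiscrete {C : Set X}
    (hC : @IsCompact X (bohrDiscrete X) C) : C.Finite := by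
  let := bohrDiscrete X
  have := t2Space_bohrDiscrete (X := X)
  by_contra hinf
  let x : ℕ ↪ C := Set.Infinite.natEmbedding C hinf
  let Y := AddSubgroup.closure (Set.range fun n => (x n : X))
  let D := C ∩ (Y : Set X)
  have : CompactSpace D :=
    isCompact_iff_compactSpace.mp (hC.inter_right (isClosed_bohrDiscrete_addSubgroup Y))
  have : Countable D :=
    ((countable_addSubgroupClosure_range _).mono Set.inter_subset_right).to_subtype
  have := CompactSpace.firstCountableTopology_of_countable (X := D)
  obtain ⟨z, φ, hφ, hlim⟩ := CompactSpace.tendsto_subseq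
    (fun n => (⟨x n, (x n).2, AddSubgroup.subset_closure ⟨n, rfl⟩⟩ : D))
  have hconv : ∀ χ : X →+ Torus, Tendsto (fun k => χ (x (φ k) - z)) atTop (𝓝 0) := fun χ => by
    simp only [map_sub]
    rw [← sub_self (χ z)]
    exact (((continuous_bohrDiscrete χ).comp continuous_subtype_val).tendsto z |>.comp hlim).sub
      tendsto_const_nhds
  obtain ⟨N, hN⟩ := eventually_atTop.mp (eventually_eq_zero_of_forall_char_tendsto_zero hconv)
  have hz : ∀ k ≥ N, (x (φ k) : X) = z := fun k hk => sub_eq_zero.mp (hN k hk)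
  exact (hφ N.lt_succ_self).ne
    (x.injective (Subtype.ext ((hz N le_rfl).trans (hz (N + 1) N.le_succ).symm)))

end Bohr

section KSpace

variable {X : Type*} [TopologicalSpace X]

lemma IsKSpace.isClosed_preimage (hk : IsKSpace ‹TopologicalSpace X›) {Y : Type*}
    [TopologicalSpace Y] [T1Space Y] (hY : ∀ C : Set Y, IsCompact C → C.Finite) {f : X → Y}
    (hf : Continuous f) (B : Set Y) : IsClosed (f ⁻¹' B) := by
  refine hk _ fun K hK => ?_
  have hfin : (f '' K ∩ B).Finite := (hY _ (hK.image hf)).inter_of_left B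
  have hKB : {x : K | (x : X) ∈ f ⁻¹' B} = (f ∘ Subtype.val) ⁻¹' (f '' K ∩ B) := by
    ext x
    exact ⟨fun hx => ⟨Set.mem_image_of_mem f x.2, hx⟩, And.right⟩
  rw [hKB]
  exact hfin.isClosed.preimage (hf.comp continuous_subtype_val)

lemma IsKSpace.sequentialSpace [Countable X] [T2Space X] (hk : IsKSpace ‹TopologicalSpace X›) :
    SequentialSpace X := by
  refine ⟨fun A hA => hk A fun K hK => ?_⟩
  have : CompactSpace K := isCompact_iff_compactSpace.mp hK
  have := CompactSpace.firstCountableTopology_of_countable (X := K)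
  exact (hA.preimage continuous_subtype_val.seqContinuous).isClosed

end KSpace

lemma countable_of_isOpen_addSubgroup [AddCommGroup G] {t : TopologicalSpace G}
    (hpc : PrecompactCover t) {H : AddSubgroup G} (hH : IsOpen[t] (H : Set G))
    (hHc : (H : Set G).Countable) : Countable G := by
  obtain ⟨F, hF, hcov⟩ := hpc _ (hH.mem_nhds H.zero_mem)
  refine Set.countable_univ_iff.mp ((hF.countable.biUnion fun f _ => hHc.image (f + ·)).mono ?_)
  intro x _
  obtain ⟨f, hf, hxf⟩ := hcov x
  exact Set.mem_biUnion hf ⟨x - f, hxf, add_sub_cancel _ _⟩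

lemma IsTauU.continuous_mk_bohrDiscrete [AddCommGroup G] {u : ℕ → G} {τ : TopologicalSpace G}
    (hτu : IsTauU u τ) :
    Continuous[τ, bohrDiscrete _]
      (QuotientAddGroup.mk : G → G ⧸ AddSubgroup.closure (Set.range u)) := by
  refine continuous_iInf_rng.mpr fun ψ => continuous_induced_rng.mpr ?_
  refine hτu.continuous_of_tendsto (ψ.comp (QuotientAddGroup.mk' _)) ?_
  have : ∀ n, ψ.comp (QuotientAddGroup.mk' _) (u n) = 0 := fun n => by
    have hn : u n ∈ AddSubgroup.closure (Set.range u) := AddSubgroup.subset_closure ⟨n, rfl⟩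
    simp [(QuotientAddGroup.eq_zero_iff (u n)).mpr hn]
  simp only [this, tendsto_const_nhds]

/-- An ss-characterized precompact Hausdorff abelian group which is a
k-space is countable and sequential. -/
theorem stmt10 {G : Type*} [AddCommGroup G] (τ : TopologicalSpace G)
    (hss : SSCharacterized τ) (hk : IsKSpace τ) :
    Countable G ∧ @SequentialSpace G τ := by
  obtain ⟨u, hτu⟩ := hss
  obtain ⟨⟨-, ht2⟩, hpc⟩ := hτu.1
  let H := AddSubgroup.closure (Set.range u)
  have hHopen : IsOpen[τ] (H : Set G) := by
    let := bohrDiscrete (G ⧸ H)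
    have := t2Space_bohrDiscrete (X := G ⧸ H)
    have hH : QuotientAddGroup.mk ⁻¹' ({0} : Set (G ⧸ H)) = H := by
      ext; simp [QuotientAddGroup.eq_zero_iff]
    rw [← hH, ← isClosed_compl_iff, ← Set.preimage_compl]
    exact hk.isClosed_preimage (fun _ => finite_of_isCompact_bohrDiscrete)
      hτu.continuous_mk_bohrDiscrete _
  have := countable_of_isOpen_addSubgroup hpc hHopen (countable_addSubgroupClosure_range u)
  exact ⟨this, hk.sequentialSpace⟩

end SSChar
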